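/- Let m ≥ 1 and let J ⊆ A be the ideal generated by ε·τ^m·x − h·𝐟_(m−1), 𝐟_m, h·x, and h^(2m) − (−1)^m·τ^(m+1)·x² (the ideal J_n for n = 2m). Then an element a of the quotient ring A/J is an additive torsion element (i.e. k·a = 0 for some integer k ≥ 1) if and only if a lies in the ideal of A/J generated by the class of ε. (Proposition 4.6(iii), case n = 2m.) -/

import Mathlib

/- Context: `A = ℤ[ε,τ,σ,h,x]/(2ε, τσ-1)` models `𝒜[h,x]` where
`𝒜 = ℤ[ε,τ,τ⁻¹]/(2ε)`, and for `m ≥ 0`,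
`𝐟_m = ∑_{a+2b=m} C(a+b,b)·ε^(2a+1)·τ^b·h^(2b) ∈ A`. -/

noncomputable section

open MvPolynomial

abbrev Apre : Type := MvPolynomial (Fin 5) ℤ  -- ε, τ, σ, h, x

def AI : Ideal Apre := Ideal.span {2 * X 0, X 1 * X 2 - 1}

abbrev A : Type := Apre ⧸ AI

def ε : A := Ideal.Quotient.mk AI (X 0)
def τ : A := Ideal.Quotient.mk AI (X 1)
def σ : A := Ideal.Quotient.mk AI (X 2)
def h : A := Ideal.Quotient.mk AI (X 3)
def x : A := Ideal.Quotient.mk AI (X 4)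

def f (m : ℕ) : A :=
  ∑ b ∈ Finset.range (m / 2 + 1),
    (Nat.choose (m - b) b : A) * ε ^ (2 * (m - 2 * b) + 1) * τ ^ b * h ^ (2 * b)

def J (m : ℕ) : Ideal A :=
  Ideal.span {ε * τ ^ m * x - h * f (m - 1), f m, h * x,
    h ^ (2 * m) - (-1 : A) ^ m * τ ^ (m + 1) * x ^ 2}

/-! Modulo `ε` every generator of `J m` other than `h x` and `h ^ 2m - (-1) ^ m τ ^ (m+1) x ^ 2`
vanishes, because each `𝐟_k` is a multiple of `ε`. Hence `(A ⧸ J m) ⧸ (ε)` is the ring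
`ℤ[T,T⁻¹][h,x] ⧸ (h x, h ^ 2m - (-1) ^ m T ^ (m+1) x ^ 2)`, a free `ℤ[T,T⁻¹]`-module on
`1, h, …, h ^ 2m, x`: there `x ^ 2` is a unit multiple of `h ^ 2m`, and `h ^ (2m+1) = x ^ 3 = 0`.
This ring is torsion-free, so a torsion element of `A ⧸ J m` lies in `(ε)`.
Conversely `2 ε = 0`.
-/

namespace HxAlgebra

variable {R : Type*} [CommRing R] (u : Rˣ) (n : ℕ)

def ideal : Ideal (MvPolynomial (Fin 2) R) :=
  Ideal.span {X 0 * X 1, X 0 ^ n - C (u : R) * X 1 ^ 2}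

/-- Coordinates of `X 0 ^ i * X 1 ^ j` in the basis `X 0 ^ 0, …, X 0 ^ n, X 1` of the quotient
by `ideal u n`: there `X 1 ^ 2 = u⁻¹ • X 0 ^ n`, and every other monomial vanishes. -/
def coordMonomial (i j : ℕ) : (ℕ →₀ R) × R :=
  if j = 0 then (if i ≤ n then (Finsupp.single i 1, 0) else 0)
  else if i = 0 ∧ j = 1 then (0, 1)
  else if i = 0 ∧ j = 2 then (Finsupp.single n (↑u⁻¹ : R), 0)
  else 0

def coord : MvPolynomial (Fin 2) R →ₗ[R] (ℕ →₀ R) × R :=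
  (basisMonomials (Fin 2) R).constr R fun s => coordMonomial u n (s 0) (s 1)

def ofCoord : (ℕ →₀ R) × R →ₗ[R] MvPolynomial (Fin 2) R ⧸ ideal u n :=
  (Finsupp.linearCombination R fun i => Ideal.Quotient.mk _ (X 0) ^ i).coprod
    (LinearMap.toSpanSingleton R _ (Ideal.Quotient.mk _ (X 1)))

theorem coord_monomial (s : Fin 2 →₀ ℕ) (r : R) :
    coord u n (monomial s r) = r • coordMonomial u n (s 0) (s 1) := by
  rw [← mul_one r, ← smul_eq_mul, ← smul_monomial, map_smul, smul_eq_mul, mul_one, coord]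
  exact congrArg (r • ·) ((basisMonomials (Fin 2) R).constr_basis R _ s)

theorem coord_mul_X_zero_mul_X_one (a : MvPolynomial (Fin 2) R) :
    coord u n (a * (X 0 * X 1)) = 0 := by
  induction a using MvPolynomial.induction_on' with
  | monomial s r =>
    rw [X, X, monomial_mul, monomial_mul, coord_monomial]
    simp [coordMonomial]
  | add p q hp hq => rw [add_mul, map_add, hp, hq, add_zero]

theorem coord_mul_X_zero_pow_sub (hn : n ≠ 0) (a : MvPolynomial (Fin 2) R) :
    coord u n (a * (X 0 ^ n - C (u : R) * X 1 ^ 2)) = 0 := by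
  induction a using MvPolynomial.induction_on' with
  | monomial s r =>
    rw [X_pow_eq_monomial, X_pow_eq_monomial, C_mul_monomial, mul_sub, monomial_mul,
      monomial_mul, map_sub, coord_monomial, coord_monomial]
    by_cases hs : s 0 = 0 ∧ s 1 = 0
    · simp [coordMonomial, hs, Finsupp.smul_single, mul_assoc]
    · simp [coordMonomial, hn, hs]
      exact fun h1 h0 => (hs ⟨h0, h1⟩).elim
  | add p q hp hq => rw [add_mul, map_add, hp, hq, add_zero]

theorem coord_eq_zero_of_mem (hn : n ≠ 0) {q : MvPolynomial (Fin 2) R} (hq : q ∈ ideal u n) :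
    coord u n q = 0 := by
  obtain ⟨a, b, rfl⟩ := Ideal.mem_span_pair.1 hq
  rw [map_add, coord_mul_X_zero_mul_X_one, coord_mul_X_zero_pow_sub u n hn, add_zero]

variable {u n}

theorem mk_X_zero_mul_mk_X_one :
    Ideal.Quotient.mk (ideal u n) (X 0) * Ideal.Quotient.mk (ideal u n) (X 1) = 0 := by
  rw [← map_mul, Ideal.Quotient.eq_zero_iff_mem]
  exact Ideal.subset_span (by simp)

theorem mk_X_zero_pow : Ideal.Quotient.mk (ideal u n) (X 0) ^ n =
    Ideal.Quotient.mk (ideal u n) (C (u : R)) * Ideal.Quotient.mk (ideal u n) (X 1) ^ 2 := by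
  rw [← map_pow, ← map_pow, ← map_mul, Ideal.Quotient.mk_eq_mk_iff_sub_mem]
  exact Ideal.subset_span (by simp)

theorem mk_X_zero_pow_eq_zero {i : ℕ} (hi : n < i) :
    Ideal.Quotient.mk (ideal u n) (X 0) ^ i = 0 := by
  obtain ⟨k, rfl⟩ := Nat.exists_eq_add_of_lt hi
  linear_combination (Ideal.Quotient.mk (ideal u n) (X 0) ^ (k + 1)) * mk_X_zero_pow (u := u) +
    (Ideal.Quotient.mk (ideal u n) (C (u : R)) * Ideal.Quotient.mk (ideal u n) (X 1) *
      Ideal.Quotient.mk (ideal u n) (X 0) ^ k) * mk_X_zero_mul_mk_X_one (u := u)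

theorem mk_X_one_pow_eq_zero (hn : n ≠ 0) {j : ℕ} (hj : 2 < j) :
    Ideal.Quotient.mk (ideal u n) (X 1) ^ j = 0 := by
  obtain ⟨k, rfl⟩ := Nat.exists_eq_add_of_lt hj
  obtain ⟨l, rfl⟩ := Nat.exists_eq_succ_of_ne_zero hn
  have hu : Ideal.Quotient.mk (ideal u (l + 1)) (C (↑u⁻¹ : R)) *
      Ideal.Quotient.mk (ideal u (l + 1)) (C (u : R)) = 1 := by
    rw [← map_mul, ← map_mul, Units.inv_mul, map_one, map_one]
  set p := Ideal.Quotient.mk (ideal u (l + 1)) (X 0)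
  set q := Ideal.Quotient.mk (ideal u (l + 1)) (X 1)
  set v := Ideal.Quotient.mk (ideal u (l + 1)) (C (↑u⁻¹ : R))
  linear_combination (-v * q ^ (k + 1)) * mk_X_zero_pow (u := u) +
    (v * q ^ k * p ^ l) * mk_X_zero_mul_mk_X_one (u := u) - q ^ (k + 3) * hu

theorem ofCoord_coordMonomial (hn : n ≠ 0) (i j : ℕ) :
    ofCoord u n (coordMonomial u n i j) =
      Ideal.Quotient.mk _ (X 0) ^ i * Ideal.Quotient.mk _ (X 1) ^ j := by
  unfold coordMonomial
  split_ifs with hj hi hx hx2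
  all_goals simp only [ofCoord, LinearMap.coprod_apply, Finsupp.linearCombination_single,
    LinearMap.toSpanSingleton_apply, map_zero, one_smul, add_zero, zero_add]
  · rw [hj, pow_zero, mul_one]
  · rw [mk_X_zero_pow_eq_zero (not_le.1 hi), zero_mul]
  · rw [hx.1, hx.2, pow_zero, pow_one, one_mul]
  · rw [hx2.1, hx2.2, pow_zero, one_mul, mk_X_zero_pow, ← map_pow, ← map_mul,
      ← Ideal.Quotient.mkₐ_eq_mk R, ← map_smul, smul_eq_C_mul, ← mul_assoc, ← C_mul,
      Units.inv_mul, C_1, one_mul]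
  · rcases Nat.eq_zero_or_pos i with rfl | hi
    · rw [mk_X_one_pow_eq_zero hn (by omega), mul_zero]
    · obtain ⟨i, rfl⟩ := Nat.exists_eq_add_of_lt hi
      obtain ⟨j, rfl⟩ := Nat.exists_eq_add_of_lt (Nat.pos_of_ne_zero hj)
      linear_combination (-(Ideal.Quotient.mk (ideal u n) (X 0) ^ i *
        Ideal.Quotient.mk (ideal u n) (X 1) ^ j)) * mk_X_zero_mul_mk_X_one (u := u)

theorem ofCoord_coord (hn : n ≠ 0) (q : MvPolynomial (Fin 2) R) :
    ofCoord u n (coord u n q) = Ideal.Quotient.mk _ q := by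
  induction q using MvPolynomial.induction_on' with
  | monomial s r =>
    rw [coord_monomial, map_smul, ofCoord_coordMonomial hn, monomial_eq,
      Finsupp.prod_fintype _ _ (by simp), Fin.prod_univ_two, ← smul_eq_C_mul,
      ← Ideal.Quotient.mkₐ_eq_mk R, map_smul, map_mul, map_pow, map_pow]
  | add p q hp hq => rw [map_add, map_add, hp, hq, map_add]

theorem mk_eq_mk_iff_coord_eq (hn : n ≠ 0) {p q : MvPolynomial (Fin 2) R} :
    Ideal.Quotient.mk (ideal u n) p = Ideal.Quotient.mk _ q ↔ coord u n p = coord u n q := by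
  refine ⟨fun h => ?_, fun h => by rw [← ofCoord_coord hn, h, ofCoord_coord hn]⟩
  rw [← sub_eq_zero, ← map_sub]
  exact coord_eq_zero_of_mem u n hn ((Ideal.Quotient.mk_eq_mk_iff_sub_mem p q).1 h)

theorem isAddTorsionFree [IsAddTorsionFree R] (hn : n ≠ 0) :
    IsAddTorsionFree (MvPolynomial (Fin 2) R ⧸ ideal u n) := by
  refine ⟨fun k hk a b hab => ?_⟩
  obtain ⟨p, rfl⟩ := Ideal.Quotient.mk_surjective a
  obtain ⟨q, rfl⟩ := Ideal.Quotient.mk_surjective b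
  simp only [← map_nsmul, mk_eq_mk_iff_coord_eq hn] at hab ⊢
  rw [map_nsmul, map_nsmul] at hab
  exact IsAddTorsionFree.nsmul_right_injective hk hab

end HxAlgebra

instance AddMonoidAlgebra.isAddTorsionFree {R M : Type*} [Semiring R] [IsAddTorsionFree R] :
    IsAddTorsionFree (AddMonoidAlgebra R M) :=
  Function.Injective.isAddTorsionFree (coeffAddEquiv (R := R) (M := M)).toAddMonoidHom
    coeffAddEquiv.injective

theorem RingHom.map_eq_zero_of_mem_span {R S : Type*} [Semiring R] [Semiring S] (g : R →+* S)
    {s : Set R} (hs : ∀ a ∈ s, g a = 0) {r : R} (hr : r ∈ Ideal.span s) : g r = 0 :=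
  (Ideal.span_le (I := RingHom.ker g)).2 hs hr

open scoped LaurentPolynomial
open LaurentPolynomial (T isUnit_T)

theorem τ_mul_σ : τ * σ = 1 := by
  rw [τ, σ, ← map_mul, ← map_one (Ideal.Quotient.mk AI), Ideal.Quotient.mk_eq_mk_iff_sub_mem]
  exact Ideal.subset_span (by simp)

theorem two_mul_ε : 2 * ε = 0 := by
  rw [ε, ← map_ofNat (Ideal.Quotient.mk AI), ← map_mul, Ideal.Quotient.eq_zero_iff_mem]
  exact Ideal.subset_span (by simp)

theorem ε_dvd_f (k : ℕ) : ε ∣ f k :=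
  Finset.dvd_sum fun _ _ => ((dvd_pow_self ε (Nat.succ_ne_zero _)).mul_left _).mul_right _
    |>.mul_right _

def τUnit : Aˣ := ⟨τ, σ, τ_mul_σ, by rw [mul_comm, τ_mul_σ]⟩

def hxUnit (m : ℕ) : (ℤ[T;T⁻¹])ˣ := (-1) ^ m * (isUnit_T 1).unit ^ (m + 1)

theorem hxUnit_val (m : ℕ) : (hxUnit m : ℤ[T;T⁻¹]) = (-1) ^ m * T 1 ^ (m + 1) := by
  simp [hxUnit]

abbrev HxQuot (m : ℕ) : Type :=
  MvPolynomial (Fin 2) ℤ[T;T⁻¹] ⧸ HxAlgebra.ideal (hxUnit m) (2 * m)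

def hxImage (m : ℕ) : Fin 5 → HxQuot m :=
  ![0, Ideal.Quotient.mk _ (C (T 1)), Ideal.Quotient.mk _ (C (T (-1))),
    Ideal.Quotient.mk _ (X 0), Ideal.Quotient.mk _ (X 1)]

def toHxQuotA (m : ℕ) : A →+* HxQuot m :=
  Ideal.Quotient.lift AI (aeval (hxImage m)).toRingHom fun _ =>
    RingHom.map_eq_zero_of_mem_span _ <| by
      simp [hxImage]
      rw [← map_mul, ← C_mul, ← LaurentPolynomial.T_add]
      simp

theorem toHxQuotA_mk_X (m : ℕ) (i : Fin 5) :
    toHxQuotA m (Ideal.Quotient.mk AI (X i)) = hxImage m i := by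
  simp [toHxQuotA]

theorem toHxQuotA_ε (m : ℕ) : toHxQuotA m ε = 0 :=
  toHxQuotA_mk_X m 0

theorem toHxQuotA_τ (m : ℕ) : toHxQuotA m τ = Ideal.Quotient.mk _ (C (T 1)) :=
  toHxQuotA_mk_X m 1

theorem toHxQuotA_h (m : ℕ) : toHxQuotA m h = Ideal.Quotient.mk _ (X 0) :=
  toHxQuotA_mk_X m 3

theorem toHxQuotA_x (m : ℕ) : toHxQuotA m x = Ideal.Quotient.mk _ (X 1) :=
  toHxQuotA_mk_X m 4

theorem toHxQuotA_f (m k : ℕ) : toHxQuotA m (f k) = 0 := by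
  obtain ⟨c, hc⟩ := ε_dvd_f k
  rw [hc, map_mul, toHxQuotA_ε, zero_mul]

def toHxQuot (m : ℕ) : A ⧸ J m →+* HxQuot m :=
  Ideal.Quotient.lift (J m) (toHxQuotA m) fun _ => RingHom.map_eq_zero_of_mem_span _ <| by
    simp only [Set.mem_insert_iff, Set.mem_singleton_iff, forall_eq_or_imp, forall_eq, map_sub,
      map_mul, map_pow, map_neg, map_one, toHxQuotA_ε, toHxQuotA_f, toHxQuotA_τ, toHxQuotA_h,
      toHxQuotA_x]
    refine ⟨by ring, trivial, HxAlgebra.mk_X_zero_mul_mk_X_one, ?_⟩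
    rw [sub_eq_zero, HxAlgebra.mk_X_zero_pow, hxUnit_val, C_mul, C_pow, C_pow, map_mul, map_pow,
      map_pow, C_neg, C_1, map_neg, map_one]

theorem toHxQuot_mk (m : ℕ) (a : A) : toHxQuot m (Ideal.Quotient.mk (J m) a) = toHxQuotA m a :=
  Ideal.Quotient.lift_mk _ _ _

abbrev EpsQuot (m : ℕ) : Type := A ⧸ (J m ⊔ Ideal.span {ε})

def ofHxQuotPoly (m : ℕ) : MvPolynomial (Fin 2) ℤ[T;T⁻¹] →+* EpsQuot m :=
  eval₂Hom (LaurentPolynomial.eval₂ (Int.castRingHom _)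
      (Units.map (Ideal.Quotient.mk (J m ⊔ Ideal.span {ε})).toMonoidHom τUnit))
    ![Ideal.Quotient.mk _ h, Ideal.Quotient.mk _ x]

theorem mk_eq_zero_of_mem_J {m : ℕ} {a : A} (ha : a ∈ J m) :
    Ideal.Quotient.mk (J m ⊔ Ideal.span {ε}) a = 0 :=
  Ideal.Quotient.eq_zero_iff_mem.2 (Ideal.mem_sup_left ha)

def ofHxQuot (m : ℕ) : HxQuot m →+* EpsQuot m :=
  Ideal.Quotient.lift _ (ofHxQuotPoly m) fun _ => RingHom.map_eq_zero_of_mem_span _ <| by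
    simp only [Set.mem_insert_iff, Set.mem_singleton_iff, forall_eq_or_imp, forall_eq]
    constructor
    · rw [ofHxQuotPoly, map_mul, eval₂Hom_X', eval₂Hom_X', Matrix.cons_val_one,
        Matrix.cons_val_zero, Matrix.cons_val_zero, ← map_mul]
      exact mk_eq_zero_of_mem_J (Ideal.subset_span (by simp))
    · have hJ := mk_eq_zero_of_mem_J (m := m)
        (a := h ^ (2 * m) - (-1 : A) ^ m * τ ^ (m + 1) * x ^ 2) (Ideal.subset_span (by simp))
      rw [ofHxQuotPoly, map_sub, map_mul, map_pow, map_pow, eval₂Hom_X', eval₂Hom_X',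
        eval₂Hom_C, hxUnit_val, Matrix.cons_val_one, Matrix.cons_val_zero, Matrix.cons_val_zero,
        map_mul, map_pow, map_pow, map_neg, map_one, LaurentPolynomial.eval₂_T, zpow_one,
        Units.coe_map]
      rwa [map_sub, map_mul, map_mul, map_pow, map_pow, map_pow, map_neg, map_one] at hJ

theorem ofHxQuot_mk (m : ℕ) (p : MvPolynomial (Fin 2) ℤ[T;T⁻¹]) :
    ofHxQuot m (Ideal.Quotient.mk _ p) = ofHxQuotPoly m p :=
  Ideal.Quotient.lift_mk _ _ _

theorem ofHxQuot_toHxQuot_mk (m : ℕ) (a : A) :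
    ofHxQuot m (toHxQuot m (Ideal.Quotient.mk (J m) a)) = Ideal.Quotient.mk _ a := by
  rw [toHxQuot_mk]
  suffices (ofHxQuot m).comp (toHxQuotA m) = Ideal.Quotient.mk _ from RingHom.congr_fun this a
  refine Ideal.Quotient.ringHom_ext (MvPolynomial.ringHom_ext (fun _ => by simp) fun i => ?_)
  fin_cases i
  all_goals simp [toHxQuotA_mk_X, hxImage, ofHxQuot_mk, ofHxQuotPoly]
  · rw [eq_comm, Ideal.Quotient.eq_zero_iff_mem]
    exact Ideal.mem_sup_right (Ideal.mem_span_singleton_self ε)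
  all_goals rfl

theorem mem_span_ε_of_toHxQuot_eq_zero {m : ℕ} {a : A ⧸ J m} (ha : toHxQuot m a = 0) :
    a ∈ Ideal.span {Ideal.Quotient.mk (J m) ε} := by
  obtain ⟨p, rfl⟩ := Ideal.Quotient.mk_surjective a
  have hp : p ∈ J m ⊔ Ideal.span {ε} := by
    rw [← Ideal.Quotient.eq_zero_iff_mem, ← ofHxQuot_toHxQuot_mk, ha, map_zero]
  obtain ⟨j, hj, e, he, rfl⟩ := Submodule.mem_sup.1 hp
  obtain ⟨c, rfl⟩ := Ideal.mem_span_singleton'.1 he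
  rw [map_add, Ideal.Quotient.eq_zero_iff_mem.2 hj, zero_add, map_mul]
  exact Ideal.mul_mem_left _ _ (Ideal.mem_span_singleton_self _)

theorem torsion_eq_eps_ideal_even (m : ℕ) (hm : 1 ≤ m) (a : A ⧸ J m) :
    (∃ k : ℤ, 1 ≤ k ∧ k • a = 0) ↔ a ∈ Ideal.span {Ideal.Quotient.mk (J m) ε} := by
  constructor
  · rintro ⟨k, hk, hka⟩
    have : IsAddTorsionFree (HxQuot m) := HxAlgebra.isAddTorsionFree (by omega)
    refine mem_span_ε_of_toHxQuot_eq_zero ?_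
    rw [← IsAddTorsionFree.zsmul_eq_zero_iff_right (n := k) (by omega), ← map_zsmul, hka,
      map_zero]
  · intro ha
    obtain ⟨b, rfl⟩ := Ideal.mem_span_singleton'.1 ha
    refine ⟨2, one_le_two, ?_⟩
    have h2ε : 2 * Ideal.Quotient.mk (J m) ε = 0 := by
      rw [← map_ofNat (Ideal.Quotient.mk (J m)) 2, ← map_mul, two_mul_ε, map_zero]
    linear_combination b * h2ε

end
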